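/- arXiv:2304.00833 — 2 statements merged into one kernel-verified Lean document; each statement's English description precedes it below -/
import Mathlib

section
/- Let φ : ℝ² → ℝ and s^t, s^x : ℝ² → ℝ be smooth, let ρ, τ, γ > 0, and set L(q, v_t, v_x, s¹, s²) = ½ρ v_t² − ½τ v_x² − γ s¹. Suppose φ satisfies ρ φ_tt − τ φ_xx + γρ φ_t = 0 and ∂s^t/∂t + ∂s^x/∂x = L(φ, φ_t, φ_x, s^t, s^x). Then the pair F¹ = (1/ρ) s^t − ½ φ φ_t and F² = (1/ρ) s^x + (τ/(2ρ)) φ φ_x (evaluated along the solution) satisfies ∂F¹/∂t + ∂F²/∂x = −γ F¹. -/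
noncomputable def pt (f : ℝ → ℝ → ℝ) (t x : ℝ) : ℝ := deriv (fun u => f u x) t
noncomputable def px (f : ℝ → ℝ → ℝ) (t x : ℝ) : ℝ := deriv (fun u => f t u) x

/-- The damped vibrating string Lagrangian L(q, v_t, v_x, s¹, s²). -/
noncomputable def Lag (ρ τ γ q vt vx s1 s2 : ℝ) : ℝ := ρ / 2 * vt ^ 2 - τ / 2 * vx ^ 2 - γ * s1

section helpers
variable {f : ℝ → ℝ → ℝ}

lemma hasDerivAt_t (hf : ContDiff ℝ ((⊤ : ℕ∞) : WithTop ℕ∞) (fun p : ℝ × ℝ => f p.1 p.2))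
    (t x : ℝ) :
    HasDerivAt (fun u => f u x) (fderiv ℝ (fun p : ℝ × ℝ => f p.1 p.2) (t, x) (1, 0)) t := by
  have h1 : HasDerivAt (fun u : ℝ => ((u, x) : ℝ × ℝ)) ((1 : ℝ), (0 : ℝ)) t :=
    HasDerivAt.prodMk (hasDerivAt_id t) (hasDerivAt_const t x)
  exact ((hf.differentiable (by simp) (t, x)).hasFDerivAt.comp_hasDerivAt t h1)

lemma hasDerivAt_x (hf : ContDiff ℝ ((⊤ : ℕ∞) : WithTop ℕ∞) (fun p : ℝ × ℝ => f p.1 p.2))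
    (t x : ℝ) :
    HasDerivAt (fun u => f t u) (fderiv ℝ (fun p : ℝ × ℝ => f p.1 p.2) (t, x) (0, 1)) x := by
  have h1 : HasDerivAt (fun u : ℝ => ((t, u) : ℝ × ℝ)) ((0 : ℝ), (1 : ℝ)) x :=
    HasDerivAt.prodMk (hasDerivAt_const x t) (hasDerivAt_id x)
  exact ((hf.differentiable (by simp) (t, x)).hasFDerivAt.comp_hasDerivAt x h1)

lemma pt_hasDerivAt (hf : ContDiff ℝ ((⊤ : ℕ∞) : WithTop ℕ∞) (fun p : ℝ × ℝ => f p.1 p.2))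
    (t x : ℝ) : HasDerivAt (fun u => f u x) (pt f t x) t := by
  have h := hasDerivAt_t hf t x
  have e : pt f t x = _ := h.deriv
  rw [e]; exact h

lemma px_hasDerivAt (hf : ContDiff ℝ ((⊤ : ℕ∞) : WithTop ℕ∞) (fun p : ℝ × ℝ => f p.1 p.2))
    (t x : ℝ) : HasDerivAt (fun u => f t u) (px f t x) x := by
  have h := hasDerivAt_x hf t x
  have e : px f t x = _ := h.deriv
  rw [e]; exact h

lemma contDiff_pt (hf : ContDiff ℝ ((⊤ : ℕ∞) : WithTop ℕ∞) (fun p : ℝ × ℝ => f p.1 p.2)) :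
    ContDiff ℝ ((⊤ : ℕ∞) : WithTop ℕ∞) (fun p : ℝ × ℝ => pt f p.1 p.2) := by
  have h1 : ContDiff ℝ ((⊤ : ℕ∞) : WithTop ℕ∞) (fderiv ℝ (fun p : ℝ × ℝ => f p.1 p.2)) :=
    (contDiff_infty_iff_fderiv.mp hf).2
  have h2 : ContDiff ℝ ((⊤ : ℕ∞) : WithTop ℕ∞) (fun p : ℝ × ℝ =>
      fderiv ℝ (fun p : ℝ × ℝ => f p.1 p.2) p ((1 : ℝ), (0 : ℝ))) :=
    h1.clm_apply contDiff_const
  convert h2 using 1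
  funext p
  exact (hasDerivAt_t hf p.1 p.2).deriv

lemma contDiff_px (hf : ContDiff ℝ ((⊤ : ℕ∞) : WithTop ℕ∞) (fun p : ℝ × ℝ => f p.1 p.2)) :
    ContDiff ℝ ((⊤ : ℕ∞) : WithTop ℕ∞) (fun p : ℝ × ℝ => px f p.1 p.2) := by
  have h1 : ContDiff ℝ ((⊤ : ℕ∞) : WithTop ℕ∞) (fderiv ℝ (fun p : ℝ × ℝ => f p.1 p.2)) :=
    (contDiff_infty_iff_fderiv.mp hf).2
  have h2 : ContDiff ℝ ((⊤ : ℕ∞) : WithTop ℕ∞) (fun p : ℝ × ℝ =>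
      fderiv ℝ (fun p : ℝ × ℝ => f p.1 p.2) p ((0 : ℝ), (1 : ℝ))) :=
    h1.clm_apply contDiff_const
  convert h2 using 1
  funext p
  exact (hasDerivAt_x hf p.1 p.2).deriv

lemma dissipation_alg (ρ τ γ A B P X Q Y s v : ℝ) (hρ : ρ ≠ 0)
    (hc : A + B = ρ/2*P^2 - τ/2*X^2 - γ*s)
    (hp : ρ*Q - τ*Y + γ*ρ*P = 0) :
    1/ρ*A - (1/2*P*P + 1/2*v*Q) + (1/ρ*B + (τ/(2*ρ)*X*X + τ/(2*ρ)*v*Y))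
      = -γ*(1/ρ*s - 1/2*v*P) := by
  have hA : 1/ρ*A + 1/ρ*B = 1/2*P^2 - τ/(2*ρ)*X^2 - γ/ρ*s := by
    field_simp
    linear_combination 2*hc
  have hp' : 1/2*v*Q - τ/(2*ρ)*v*Y + γ/2*v*P = 0 := by
    field_simp
    linear_combination v*hp
  linear_combination hA - hp'

end helpers

theorem damped_string_second_dissipation_law
    (φ st sx : ℝ → ℝ → ℝ)
    (hφ : ContDiff ℝ (⊤ : ℕ∞) (fun p : ℝ × ℝ => φ p.1 p.2))
    (hst : ContDiff ℝ (⊤ : ℕ∞) (fun p : ℝ × ℝ => st p.1 p.2))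
    (hsx : ContDiff ℝ (⊤ : ℕ∞) (fun p : ℝ × ℝ => sx p.1 p.2))
    (ρ τ γ : ℝ) (hρ : 0 < ρ) (hτ : 0 < τ) (hγ : 0 < γ)
    (hpde : ∀ t x, ρ * pt (pt φ) t x - τ * px (px φ) t x + γ * ρ * pt φ t x = 0)
    (hcons : ∀ t x, pt st t x + px sx t x
      = Lag ρ τ γ (φ t x) (pt φ t x) (px φ t x) (st t x) (sx t x)) :
    ∀ t x,
      pt (fun t x => (1 / ρ) * st t x - (1 / 2) * φ t x * pt φ t x) t x
        + px (fun t x => (1 / ρ) * sx t x + (τ / (2 * ρ)) * φ t x * px φ t x) t x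
      = -γ * ((1 / ρ) * st t x - (1 / 2) * φ t x * pt φ t x) := by
  intro t x
  have hφ' : ContDiff ℝ ((⊤ : ℕ∞) : WithTop ℕ∞) (fun p : ℝ × ℝ => φ p.1 p.2) :=
    hφ.of_le (by simp)
  have hst' : ContDiff ℝ ((⊤ : ℕ∞) : WithTop ℕ∞) (fun p : ℝ × ℝ => st p.1 p.2) :=
    hst.of_le (by simp)
  have hsx' : ContDiff ℝ ((⊤ : ℕ∞) : WithTop ℕ∞) (fun p : ℝ × ℝ => sx p.1 p.2) :=
    hsx.of_le (by simp)
  have hptφ := contDiff_pt hφ'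
  have hpxφ := contDiff_px hφ'
  have a1 := ((pt_hasDerivAt hst' t x).const_mul (1 / ρ)).sub
    (((pt_hasDerivAt hφ' t x).const_mul (1 / 2)).mul (pt_hasDerivAt hptφ t x))
  have a2 := ((px_hasDerivAt hsx' t x).const_mul (1 / ρ)).add
    (((px_hasDerivAt hφ' t x).const_mul (τ / (2 * ρ))).mul (px_hasDerivAt hpxφ t x))
  have e1 := a1.deriv
  have e2 := a2.deriv
  have hc := hcons t x
  have hp := hpde t x
  simp only [Lag] at hc
  simp only [pt, px] at hc hp e1 e2 ⊢
  erw [e1, e2]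
  exact dissipation_alg ρ τ γ _ _ _ _ _ _ _ _ hρ.ne' hc hp
end

section
/- Let Q = ℝⁿ and consider a Lagrangian L : ℝⁿ × ℝ^{nk} × ℝᵏ → ℝ with coordinates (qⁱ, vᵅⁱ, sᵅ), and the one-forms η^α_L = dsᵅ − (∂L/∂vᵅⁱ) dqⁱ. Let Γ_α = vᵅⁱ ∂/∂qⁱ + Γᵅᵝⁱ ∂/∂vᵝⁱ + Γᵅᵝ ∂/∂sᵝ be a SOPDE. Then the pair of conditions ℒ_{Γ_α} η^α_L = (∂L/∂sᵅ) η^α_L and i_{Γ_α} η^α_L = −E_L (summation over α, E_L = vᵅⁱ ∂L/∂vᵅⁱ − L) holds if and only if Γ_α(∂L/∂vᵅⁱ) − ∂L/∂qⁱ = (∂L/∂sᵅ)(∂L/∂vᵅⁱ) for all i and Γᵅᵅ = L (sum over α). -/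
abbrev Phase (n k : ℕ) := (Fin n → ℝ) × (Fin k → Fin n → ℝ) × (Fin k → ℝ)

/-- ∂f/∂qⁱ. -/
noncomputable def pdq {n k : ℕ} (i : Fin n) (f : Phase n k → ℝ) (p : Phase n k) : ℝ :=
  fderiv ℝ f p ((Pi.single i 1, 0, 0) : Phase n k)

/-- ∂f/∂vᵅⁱ. -/
noncomputable def pdv {n k : ℕ} (α : Fin k) (i : Fin n) (f : Phase n k → ℝ)
    (p : Phase n k) : ℝ :=
  fderiv ℝ f p ((0, Pi.single α (Pi.single i 1), 0) : Phase n k)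

/-- ∂f/∂sᵅ. -/
noncomputable def pds {n k : ℕ} (α : Fin k) (f : Phase n k → ℝ) (p : Phase n k) : ℝ :=
  fderiv ℝ f p ((0, 0, Pi.single α 1) : Phase n k)

/-- The contact one-form η^α_L = dsᵅ − (∂L/∂vᵅⁱ)dqⁱ evaluated at p on a tangent vector w. -/
noncomputable def etaL {n k : ℕ} (L : Phase n k → ℝ) (α : Fin k) (p w : Phase n k) : ℝ :=
  w.2.2 α - ∑ i, pdv α i L p * w.1 i

/-- Coordinate formula for the Lie derivative of a one-form along a vector field. -/
noncomputable def lieD {n k : ℕ} (X : Phase n k → Phase n k)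
    (η : Phase n k → Phase n k → ℝ) (p w : Phase n k) : ℝ :=
  fderiv ℝ (fun p' => η p' w) p (X p) + η p (fderiv ℝ X p w)

/-- The Lagrangian energy E_L = vᵅⁱ ∂L/∂vᵅⁱ − L. -/
noncomputable def energyL {n k : ℕ} (L : Phase n k → ℝ) (p : Phase n k) : ℝ :=
  (∑ α, ∑ i, p.2.1 α i * pdv α i L p) - L p

/-- The α-th component of a SOPDE. -/
def sopdeVF {n k : ℕ} (Γv : Fin k → Fin k → Fin n → Phase n k → ℝ)
    (Γs : Fin k → Fin k → Phase n k → ℝ) (α : Fin k) (p : Phase n k) : Phase n k :=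
  (p.2.1 α, fun β i => Γv α β i p, fun β => Γs α β p)

lemma pdv_contDiff {n k : ℕ} {L : Phase n k → ℝ} (hL : ContDiff ℝ (⊤ : ℕ∞) L) (α : Fin k) (i : Fin n) :
    ContDiff ℝ (⊤ : ℕ∞) (pdv α i L) := by
  unfold pdv
  exact (hL.fderiv_right (by simp)).clm_apply contDiff_const

lemma phase_decomp {n k : ℕ} (w : Phase n k) :
    (∑ i, w.1 i • ((Pi.single i 1, 0, 0) : Phase n k))
      + (∑ α, ∑ i, w.2.1 α i • ((0, Pi.single α (Pi.single i 1), 0) : Phase n k))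
      + (∑ α, w.2.2 α • ((0, 0, Pi.single α 1) : Phase n k)) = w := by
  refine Prod.ext ?_ (Prod.ext ?_ ?_) <;>
    simp only [Prod.fst_sum, Prod.snd_sum, Prod.fst_add, Prod.snd_add,
      Prod.smul_mk, Prod.mk_add_mk, smul_zero, Finset.sum_const_zero, add_zero, zero_add] <;>
    funext j <;>
    simp [Finset.sum_apply, Pi.single_apply, Finset.sum_ite_eq', smul_ite] <;>
    (try funext m) <;>
    simp [Finset.sum_apply, Pi.single_apply]

lemma fderiv_decomp {n k : ℕ} (f : Phase n k → ℝ) (p w : Phase n k) :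
    fderiv ℝ f p w = (∑ i, w.1 i * pdq i f p) + (∑ α, ∑ i, w.2.1 α i * pdv α i f p)
      + (∑ α, w.2.2 α * pds α f p) := by
  conv_lhs => rw [← phase_decomp w]
  simp only [map_add, map_sum, map_smul, smul_eq_mul]
  rfl

lemma fderiv_etaL {n k : ℕ} {L : Phase n k → ℝ} (hL : ContDiff ℝ (⊤ : ℕ∞) L) (α : Fin k)
    (p w v : Phase n k) :
    fderiv ℝ (fun p' => etaL L α p' w) p v
      = -∑ i, fderiv ℝ (fun p' => pdv α i L p') p v * w.1 i := by
  have hsum : HasFDerivAt (fun p' => ∑ i, pdv α i L p' * w.1 i)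
      (∑ i, w.1 i • fderiv ℝ (pdv α i L) p) p :=
    HasFDerivAt.fun_sum fun i _ =>
      (((pdv_contDiff hL α i).differentiable (by simp) p).hasFDerivAt).mul_const _
  have h : HasFDerivAt (fun p' => etaL L α p' w)
      (-(∑ i, w.1 i • fderiv ℝ (pdv α i L) p)) p := hsum.const_sub _
  rw [h.fderiv]
  simp [ContinuousLinearMap.sum_apply, mul_comm]

section sopde
variable {n k : ℕ} (Γv : Fin k → Fin k → Fin n → Phase n k → ℝ)
    (Γs : Fin k → Fin k → Phase n k → ℝ)

lemma fderiv_sopde_fst {α : Fin k} (hΓα : ContDiff ℝ (⊤ : ℕ∞) (sopdeVF Γv Γs α)) (p w : Phase n k) :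
    (fderiv ℝ (sopdeVF Γv Γs α) p w).1 = w.2.1 α := by
  set X := sopdeVF Γv Γs α with hX
  have hXd : HasFDerivAt X (fderiv ℝ X p) p := ((hΓα.differentiable (by simp)) p).hasFDerivAt
  let π1 : Phase n k →L[ℝ] (Fin n → ℝ) := ContinuousLinearMap.fst ℝ _ _
  let ρ : Phase n k →L[ℝ] (Fin n → ℝ) :=
    (ContinuousLinearMap.proj α).comp
      ((ContinuousLinearMap.fst ℝ _ _).comp (ContinuousLinearMap.snd ℝ _ _))
  have h1 : HasFDerivAt (π1 ∘ X) (π1.comp (fderiv ℝ X p)) p :=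
    π1.hasFDerivAt.comp p hXd
  have h2 : HasFDerivAt (π1 ∘ X) ρ p := ρ.hasFDerivAt
  have := h1.unique h2
  have happ := congrArg (fun D => D w) this
  simpa [π1, ρ] using happ

lemma fderiv_sopde_s {α : Fin k} (hΓα : ContDiff ℝ (⊤ : ℕ∞) (sopdeVF Γv Γs α)) (β : Fin k)
    (p w : Phase n k) :
    (fderiv ℝ (sopdeVF Γv Γs α) p w).2.2 β = fderiv ℝ (Γs α β) p w := by
  set X := sopdeVF Γv Γs α with hX
  have hXd : HasFDerivAt X (fderiv ℝ X p) p := ((hΓα.differentiable (by simp)) p).hasFDerivAt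
  let πs : Phase n k →L[ℝ] ℝ :=
    (ContinuousLinearMap.proj β).comp
      ((ContinuousLinearMap.snd ℝ _ _).comp (ContinuousLinearMap.snd ℝ _ _))
  have h1 : HasFDerivAt (πs ∘ X) (πs.comp (fderiv ℝ X p)) p :=
    πs.hasFDerivAt.comp p hXd
  have h2 : fderiv ℝ (Γs α β) p = πs.comp (fderiv ℝ X p) := h1.fderiv
  rw [h2]
  rfl

lemma contDiff_Γs {α : Fin k} (hΓα : ContDiff ℝ (⊤ : ℕ∞) (sopdeVF Γv Γs α)) (β : Fin k) :
    ContDiff ℝ (⊤ : ℕ∞) (Γs α β) := by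
  let πs : Phase n k →L[ℝ] ℝ :=
    (ContinuousLinearMap.proj β).comp
      ((ContinuousLinearMap.snd ℝ _ _).comp (ContinuousLinearMap.snd ℝ _ _))
  exact πs.contDiff.comp hΓα

end sopde

theorem sopde_lagrangian_equations_coordinates (n k : ℕ)
    (L : Phase n k → ℝ) (hL : ContDiff ℝ (⊤ : ℕ∞) L)
    (Γv : Fin k → Fin k → Fin n → Phase n k → ℝ)
    (Γs : Fin k → Fin k → Phase n k → ℝ)
    (hΓ : ∀ α, ContDiff ℝ (⊤ : ℕ∞) (sopdeVF Γv Γs α)) :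
    ((∀ p w : Phase n k,
        ∑ α, lieD (sopdeVF Γv Γs α) (etaL L α) p w
          = ∑ α, pds α L p * etaL L α p w) ∧
      (∀ p : Phase n k,
        ∑ α, etaL L α p (sopdeVF Γv Γs α p) = -energyL L p))
    ↔ ((∀ (i : Fin n) (p : Phase n k),
          (∑ α, fderiv ℝ (fun p' => pdv α i L p') p (sopdeVF Γv Γs α p))
            - pdq i L p
          = ∑ α, pds α L p * pdv α i L p) ∧
        (∀ p : Phase n k, ∑ α, Γs α α p = L p)) := by
  -- B-equation equivalence
  have keyB : ∀ p : Phase n k, ∑ α, etaL L α p (sopdeVF Γv Γs α p)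
      = (∑ α, Γs α α p) - (∑ α, ∑ i, p.2.1 α i * pdv α i L p) := by
    intro p
    simp only [etaL, sopdeVF, Finset.sum_sub_distrib]
    congr 1
    exact Finset.sum_congr rfl fun α _ => Finset.sum_congr rfl fun i _ => mul_comm _ _
  have hB : (∀ p : Phase n k, ∑ α, etaL L α p (sopdeVF Γv Γs α p) = -energyL L p)
      ↔ (∀ p : Phase n k, ∑ α, Γs α α p = L p) := by
    constructor <;> intro h p <;> have hp := h p
    · rw [keyB p, energyL] at hp; linarith
    · rw [keyB p, energyL]; linarith
  -- Lie derivative expansion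
  have hlie : ∀ (α : Fin k) (p w : Phase n k),
      lieD (sopdeVF Γv Γs α) (etaL L α) p w
        = fderiv ℝ (Γs α α) p w
          - (∑ i, fderiv ℝ (fun p' => pdv α i L p') p (sopdeVF Γv Γs α p) * w.1 i)
          - ∑ i, pdv α i L p * w.2.1 α i := by
    intro α p w
    unfold lieD
    rw [fderiv_etaL hL]
    unfold etaL
    rw [fderiv_sopde_s Γv Γs (hΓ α) α p w, fderiv_sopde_fst Γv Γs (hΓ α) p w]
    ring
  constructor
  · rintro ⟨hA, hBs⟩
    have hB' := hB.mp hBs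
    refine ⟨?_, hB'⟩
    intro i p
    -- sum of Γs-derivatives equals derivative of L
    have hGsum : ∀ w : Phase n k, ∑ α, fderiv ℝ (Γs α α) p w = fderiv ℝ L p w := by
      intro w
      have hfun : (fun p' => ∑ α, Γs α α p') = L := funext hB'
      have hdiff : ∀ α ∈ Finset.univ, DifferentiableAt ℝ (Γs α α) p := fun α _ =>
        ((contDiff_Γs Γv Γs (hΓ α) α).differentiable (by simp)) p
      have := fderiv_fun_sum (𝕜 := ℝ) (x := p) hdiff
      calc ∑ α, fderiv ℝ (Γs α α) p w
          = fderiv ℝ (fun p' => ∑ α, Γs α α p') p w := by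
            rw [this]; simp [ContinuousLinearMap.sum_apply]
        _ = fderiv ℝ L p w := by rw [hfun]
    have h := hA p ((Pi.single i 1, 0, 0) : Phase n k)
    simp only [hlie, etaL] at h
    have hsingle : ∀ c : Fin n → ℝ, ∑ j, c j * (Pi.single i 1 : Fin n → ℝ) j = c i := by
      intro c
      simp [Pi.single_apply, mul_ite, Finset.sum_ite_eq']
    simp only [hsingle, Pi.zero_apply, mul_zero, Finset.sum_const_zero, sub_zero,
      zero_sub, mul_neg] at h
    rw [Finset.sum_sub_distrib, hGsum, Finset.sum_neg_distrib] at h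
    have hLfd : fderiv ℝ L p ((Pi.single i 1, 0, 0) : Phase n k) = pdq i L p := rfl
    rw [hLfd] at h
    linarith
  · rintro ⟨hA', hB'⟩
    refine ⟨?_, hB.mpr hB'⟩
    intro p w
    have hGsum : ∑ α, fderiv ℝ (Γs α α) p w = fderiv ℝ L p w := by
      have hfun : (fun p' => ∑ α, Γs α α p') = L := funext hB'
      have hdiff : ∀ α ∈ Finset.univ, DifferentiableAt ℝ (Γs α α) p := fun α _ =>
        ((contDiff_Γs Γv Γs (hΓ α) α).differentiable (by simp)) p
      have := fderiv_fun_sum (𝕜 := ℝ) (x := p) hdiff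
      calc ∑ α, fderiv ℝ (Γs α α) p w
          = fderiv ℝ (fun p' => ∑ α, Γs α α p') p w := by
            rw [this]; simp [ContinuousLinearMap.sum_apply]
        _ = fderiv ℝ L p w := by rw [hfun]
    simp only [hlie, etaL]
    rw [Finset.sum_sub_distrib, Finset.sum_sub_distrib, hGsum, fderiv_decomp L p w]
    -- rearrange remaining sums
    have c1 : ∑ α, ∑ i, pdv α i L p * w.2.1 α i = ∑ α, ∑ i, w.2.1 α i * pdv α i L p :=
      Finset.sum_congr rfl fun α _ => Finset.sum_congr rfl fun i _ => mul_comm _ _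
    have c2 : (∑ α, ∑ i, fderiv ℝ (fun p' => pdv α i L p') p (sopdeVF Γv Γs α p) * w.1 i)
        = ∑ i, (∑ α, fderiv ℝ (fun p' => pdv α i L p') p (sopdeVF Γv Γs α p)) * w.1 i := by
      rw [Finset.sum_comm]
      exact Finset.sum_congr rfl fun i _ => (Finset.sum_mul _ _ _).symm
    have c3 : ∑ α, pds α L p * (w.2.2 α - ∑ i, pdv α i L p * w.1 i)
        = (∑ α, pds α L p * w.2.2 α) - ∑ i, (∑ α, pds α L p * pdv α i L p) * w.1 i := by
      simp only [mul_sub, Finset.sum_sub_distrib]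
      congr 1
      simp only [Finset.mul_sum]
      rw [Finset.sum_comm]
      refine Finset.sum_congr rfl fun i _ => ?_
      rw [Finset.sum_mul]
      exact Finset.sum_congr rfl fun α _ => (mul_assoc _ _ _).symm
    have c4 : ∑ α, w.2.2 α * pds α L p = ∑ α, pds α L p * w.2.2 α :=
      Finset.sum_congr rfl fun α _ => mul_comm _ _
    have c5 : ∑ i, (∑ α, fderiv ℝ (fun p' => pdv α i L p') p (sopdeVF Γv Γs α p)) * w.1 i
        = (∑ i, pdq i L p * w.1 i)
          + ∑ i, (∑ α, pds α L p * pdv α i L p) * w.1 i := by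
      rw [← Finset.sum_add_distrib]
      refine Finset.sum_congr rfl fun i _ => ?_
      have := hA' i p
      have hSi : (∑ α, fderiv ℝ (fun p' => pdv α i L p') p (sopdeVF Γv Γs α p))
          = pdq i L p + ∑ α, pds α L p * pdv α i L p := by linarith
      rw [hSi, add_mul]
    have c6 : ∑ i, w.1 i * pdq i L p = ∑ i, pdq i L p * w.1 i :=
      Finset.sum_congr rfl fun i _ => mul_comm _ _
    rw [c1, c2, c3, c4, c5, c6]
    ring
end
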